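/- For any σ ∈ NC_S(2n), the join σ ∨ 0̂_n in NC(2n) equals π̂ for a (unique) π ∈ NC(n); that is, the join of a same-parity non-crossing partition with the doubled singleton partition is always a doubled partition. -/
import Mathlib


open Finset

/-- Two blocks cross if there are i < k < p < q with i,p in one and k,q in the other. -/
def Crossing {α : Type*} [LinearOrder α] (B D : Finset α) : Prop :=
  ∃ i ∈ B, ∃ p ∈ B, ∃ k ∈ D, ∃ q ∈ D, i < k ∧ k < p ∧ p < q

/-- A family of blocks is non-crossing. -/
def IsNonCrossing {α : Type*} [LinearOrder α] (P : Finset (Finset α)) : Prop :=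
  ∀ B ∈ P, ∀ D ∈ P, B ≠ D → ¬ Crossing B D

/-- Non-crossing partitions of {1, ..., n}, modelled on `Fin n`. -/
def NC (n : ℕ) : Set (Finset (Finset (Fin n))) :=
  {P | (∀ B ∈ P, B.Nonempty) ∧ (∀ a : Fin n, ∃! B, B ∈ P ∧ a ∈ B) ∧ IsNonCrossing P}

/-- Reversed refinement order: every block of `π` is contained in a block of `σ`. -/
def ncle {n : ℕ} (π σ : Finset (Finset (Fin n))) : Prop :=
  ∀ B ∈ π, ∃ D ∈ σ, B ⊆ D

/-- the position of `i` (an element "i") in the interlaced set 1 < 1̄ < 2 < 2̄ < ... -/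
def oddE (n : ℕ) (i : Fin n) : Fin (2 * n) := ⟨2 * i.1, by have := i.2; omega⟩

/-- the position of `ī` (a "barred" element) in the interlaced set. -/
def evenE (n : ℕ) (i : Fin n) : Fin (2 * n) := ⟨2 * i.1 + 1, by have := i.2; omega⟩

/-- `γ ∪ σ` viewed on the interlaced set 1 < 1̄ < 2 < 2̄ < ... < n < n̄. -/
def interlace {n : ℕ} (γ σ : Finset (Finset (Fin n))) : Finset (Finset (Fin (2 * n))) :=
  γ.image (fun B => B.image (oddE n)) ∪ σ.image (fun B => B.image (evenE n))

/-- `σ` is the Kreweras complement of `γ`: the largest non-crossing partition of the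
barred copies such that `γ ∪ σ` is non-crossing on the interlaced set. -/
def IsKreweras {n : ℕ} (γ σ : Finset (Finset (Fin n))) : Prop :=
  σ ∈ NC n ∧ IsNonCrossing (interlace γ σ) ∧
    ∀ τ ∈ NC n, IsNonCrossing (interlace γ τ) → ncle τ σ

/-- Every block of `σ` consists of elements of the same parity. -/
def SameParity {n : ℕ} (σ : Finset (Finset (Fin (2 * n)))) : Prop :=
  ∀ B ∈ σ, ∀ a ∈ B, ∀ b ∈ B, a.1 % 2 = b.1 % 2

/-- Restriction of `σ ∈ NC(2n)` to the odd elements (positions `2i`), as a partition of `Fin n`. -/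
def restrictOdd (n : ℕ) (σ : Finset (Finset (Fin (2 * n)))) : Finset (Finset (Fin n)) :=
  (σ.image (fun B => Finset.univ.filter (fun i => oddE n i ∈ B))).filter (fun C => C.Nonempty)

/-- Restriction of `σ ∈ NC(2n)` to the even elements (positions `2i+1`), as a partition of `Fin n`. -/
def restrictEven (n : ℕ) (σ : Finset (Finset (Fin (2 * n)))) : Finset (Finset (Fin n)) :=
  (σ.image (fun B => Finset.univ.filter (fun i => evenE n i ∈ B))).filter (fun C => C.Nonempty)

/-- The doubled partition `π̂`: each block `(i₁,…,iₛ)` becomes `(2i₁−1,2i₁,…,2iₛ−1,2iₛ)`. -/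
def doubleP (n : ℕ) (π : Finset (Finset (Fin n))) : Finset (Finset (Fin (2 * n))) :=
  π.image (fun B => B.image (oddE n) ∪ B.image (evenE n))

/-- `0̂ₙ`, the doubling of the singleton partition: blocks `{2i−1, 2i}`. -/
def zeroHat (n : ℕ) : Finset (Finset (Fin (2 * n))) :=
  Finset.univ.image (fun i : Fin n => ({oddE n i, evenE n i} : Finset (Fin (2 * n))))

/-- `J` is the join of `P` and `Q` in the lattice `NC(m)`. -/
def IsJoin (m : ℕ) (P Q J : Finset (Finset (Fin m))) : Prop :=
  J ∈ NC m ∧ ncle P J ∧ ncle Q J ∧ ∀ τ ∈ NC m, ncle P τ → ncle Q τ → ncle J τ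

section Merge

variable {α : Type*} [LinearOrder α]

/-- a and b lie in a common member of F. -/
def memRel (F : Finset (Finset α)) (a b : α) : Prop := ∃ B ∈ F, a ∈ B ∧ b ∈ B

lemma auxA {B D E : Finset α} {t i p k q : α}
    (htB : t ∈ B) (htD : t ∈ D) (htE : t ∉ E)
    (hi : i ∈ B) (hp : p ∈ D) (hk : k ∈ E) (hq : q ∈ E)
    (h1 : i < k) (h2 : k < p) (h3 : p < q)
    (nBE : ¬Crossing B E) (nDE : ¬Crossing D E) (nED : ¬Crossing E D) : False := by
  rcases lt_trichotomy t k with h | h | h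
  · exact nDE ⟨t, htD, p, hp, k, hk, q, hq, h, h2, h3⟩
  · exact htE (h ▸ hk)
  · rcases lt_trichotomy t q with h' | h' | h'
    · exact nBE ⟨i, hi, t, htB, k, hk, q, hq, h1, h, h'⟩
    · exact htE (h' ▸ hq)
    · exact nED ⟨k, hk, q, hq, p, hp, t, htD, h2, h3, h'⟩

lemma auxB {B D E : Finset α} {t i p k q : α}
    (htB : t ∈ B) (htD : t ∈ D) (htE : t ∉ E)
    (hi : i ∈ E) (hp : p ∈ E) (hk : k ∈ B) (hq : q ∈ D)
    (h1 : i < k) (h2 : k < p) (h3 : p < q)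
    (nBE : ¬Crossing B E) (nEB : ¬Crossing E B) (nED : ¬Crossing E D) : False := by
  rcases lt_trichotomy t i with h | h | h
  · exact nBE ⟨t, htB, k, hk, i, hi, p, hp, h, h1, h2⟩
  · exact htE (h ▸ hi)
  · rcases lt_trichotomy t p with h' | h' | h'
    · exact nED ⟨i, hi, p, hp, t, htD, q, hq, h, h', h3⟩
    · exact htE (h' ▸ hp)
    · exact nEB ⟨i, hi, p, hp, k, hk, t, htB, h1, h2, h'⟩

lemma claimA [DecidableEq α] {B D E : Finset α} {t : α}
    (htB : t ∈ B) (htD : t ∈ D) (htE : t ∉ E)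
    (nBE : ¬Crossing B E) (nEB : ¬Crossing E B)
    (nDE : ¬Crossing D E) (nED : ¬Crossing E D) :
    ¬Crossing (B ∪ D) E ∧ ¬Crossing E (B ∪ D) := by
  constructor
  · rintro ⟨i, hi, p, hp, k, hk, q, hq, h1, h2, h3⟩
    rcases Finset.mem_union.1 hi with hi | hi <;> rcases Finset.mem_union.1 hp with hp | hp
    · exact nBE ⟨i, hi, p, hp, k, hk, q, hq, h1, h2, h3⟩
    · exact auxA htB htD htE hi hp hk hq h1 h2 h3 nBE nDE nED
    · exact auxA htD htB htE hi hp hk hq h1 h2 h3 nDE nBE nEB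
    · exact nDE ⟨i, hi, p, hp, k, hk, q, hq, h1, h2, h3⟩
  · rintro ⟨i, hi, p, hp, k, hk, q, hq, h1, h2, h3⟩
    rcases Finset.mem_union.1 hk with hk' | hk' <;> rcases Finset.mem_union.1 hq with hq' | hq'
    · exact nEB ⟨i, hi, p, hp, k, hk', q, hq', h1, h2, h3⟩
    · exact auxB htB htD htE hi hp hk' hq' h1 h2 h3 nBE nEB nED
    · exact auxB htD htB htE hi hp hk' hq' h1 h2 h3 nDE nED nEB
    · exact nED ⟨i, hi, p, hp, k, hk', q, hq', h1, h2, h3⟩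

lemma merge [DecidableEq α] :
    ∀ (N : ℕ) (F : Finset (Finset α)), F.card ≤ N →
    (∀ B ∈ F, ∀ D ∈ F, Disjoint B D → ¬Crossing B D) →
    (∀ B ∈ F, B.Nonempty) →
    ∃ G : Finset (Finset α),
      (∀ B ∈ G, B.Nonempty) ∧
      (∀ B ∈ G, ∀ D ∈ G, B ≠ D → Disjoint B D) ∧
      IsNonCrossing G ∧
      (∀ B ∈ F, ∃ D ∈ G, B ⊆ D) ∧
      (∀ D ∈ G, ∀ a ∈ D, ∀ b ∈ D, Relation.EqvGen (memRel F) a b) := by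
  intro N
  induction N with
  | zero =>
    intro F hcard _ _
    refine ⟨∅, by simp, by simp, by intro B hB; simp at hB, ?_, by simp⟩
    intro B hB
    exact absurd hB (by simp [Finset.card_eq_zero.1 (Nat.le_zero.1 hcard)])
  | succ N ih =>
    intro F hcard hinv hne
    by_cases hex : ∃ B ∈ F, ∃ D ∈ F, B ≠ D ∧ ¬Disjoint B D
    · obtain ⟨B, hB, D, hD, hBD, hnd⟩ := hex
      obtain ⟨t, htB, htD⟩ := Finset.not_disjoint_iff.1 hnd
      set F' : Finset (Finset α) := insert (B ∪ D) ((F.erase B).erase D) with hF'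
      have hDe : D ∈ F.erase B := Finset.mem_erase.2 ⟨hBD.symm, hD⟩
      have hcard2 : 2 ≤ F.card := Finset.one_lt_card.2 ⟨B, hB, D, hD, hBD⟩
      have hcard' : F'.card ≤ N := by
        have h1 : F'.card ≤ ((F.erase B).erase D).card + 1 := by
          rw [hF']; exact Finset.card_insert_le _ _
        have h2 : ((F.erase B).erase D).card = F.card - 1 - 1 := by
          rw [Finset.card_erase_of_mem hDe, Finset.card_erase_of_mem hB]
        omega
      have hmem' : ∀ X ∈ F', X = B ∪ D ∨ X ∈ F := by
        intro X hX
        rcases Finset.mem_insert.1 hX with h | h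
        · exact Or.inl h
        · exact Or.inr (Finset.mem_of_mem_erase (Finset.mem_of_mem_erase h))
      have hinv' : ∀ X ∈ F', ∀ Y ∈ F', Disjoint X Y → ¬Crossing X Y := by
        intro X hX Y hY hdisj
        rcases hmem' X hX with rfl | hXF <;> rcases hmem' Y hY with rfl | hYF
        · exact absurd (Finset.disjoint_left.1 hdisj (Finset.mem_union_left D htB))
            (by simp [Finset.mem_union, htB])
        · obtain ⟨dB, dD⟩ := Finset.disjoint_union_left.1 hdisj
          exact (claimA htB htD (Finset.disjoint_left.1 dB htB)
            (hinv B hB Y hYF dB) (hinv Y hYF B hB dB.symm)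
            (hinv D hD Y hYF dD) (hinv Y hYF D hD dD.symm)).1
        · obtain ⟨dB, dD⟩ := Finset.disjoint_union_right.1 hdisj
          exact (claimA htB htD (Finset.disjoint_right.1 dB htB)
            (hinv B hB X hXF dB.symm) (hinv X hXF B hB dB)
            (hinv D hD X hXF dD.symm) (hinv X hXF D hD dD)).2
        · exact hinv X hXF Y hYF hdisj
      have hne' : ∀ X ∈ F', X.Nonempty := by
        intro X hX
        rcases hmem' X hX with rfl | hXF
        · exact ⟨t, Finset.mem_union_left D htB⟩
        · exact hne X hXF
      obtain ⟨G, Gne, Gdisj, Gnc, Gref, Gconn⟩ := ih F' hcard' hinv' hne'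
      have step : ∀ x y, memRel F' x y → Relation.EqvGen (memRel F) x y := by
        rintro x y ⟨W, hW, hx, hy⟩
        rcases Finset.mem_insert.1 hW with rfl | hWF
        · have hx' : Relation.EqvGen (memRel F) x t := by
            rcases Finset.mem_union.1 hx with h | h
            · exact Relation.EqvGen.rel _ _ ⟨B, hB, h, htB⟩
            · exact Relation.EqvGen.rel _ _ ⟨D, hD, h, htD⟩
          have hy' : Relation.EqvGen (memRel F) t y := by
            rcases Finset.mem_union.1 hy with h | h
            · exact Relation.EqvGen.rel _ _ ⟨B, hB, htB, h⟩
            · exact Relation.EqvGen.rel _ _ ⟨D, hD, htD, h⟩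
          exact hx'.trans _ _ _ hy'
        · exact Relation.EqvGen.rel _ _
            ⟨W, Finset.mem_of_mem_erase (Finset.mem_of_mem_erase hWF), hx, hy⟩
      have down : ∀ x y, Relation.EqvGen (memRel F') x y → Relation.EqvGen (memRel F) x y := by
        intro x y h
        induction h with
        | rel a b hab => exact step a b hab
        | refl a => exact Relation.EqvGen.refl a
        | symm a b _ ihh => exact ihh.symm _ _
        | trans a b c _ _ ih1 ih2 => exact ih1.trans _ _ _ ih2
      refine ⟨G, Gne, Gdisj, Gnc, ?_, ?_⟩
      · intro X hX
        by_cases hXB : X = B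
        · obtain ⟨Y, hY, hsub⟩ := Gref (B ∪ D) (Finset.mem_insert_self _ _)
          exact ⟨Y, hY, hXB ▸ (Finset.subset_union_left.trans hsub)⟩
        · by_cases hXD : X = D
          · obtain ⟨Y, hY, hsub⟩ := Gref (B ∪ D) (Finset.mem_insert_self _ _)
            exact ⟨Y, hY, hXD ▸ (Finset.subset_union_right.trans hsub)⟩
          · exact Gref X (Finset.mem_insert_of_mem
              (Finset.mem_erase.2 ⟨hXD, Finset.mem_erase.2 ⟨hXB, hX⟩⟩))
      · intro X hX a ha b hb
        exact down a b (Gconn X hX a ha b hb)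
    · push_neg at hex
      refine ⟨F, hne, hex, ?_, fun B hB => ⟨B, hB, Finset.Subset.refl B⟩, ?_⟩
      · intro X hX Y hY hXY
        exact hinv X hX Y hY (hex X hX Y hY hXY)
      · intro X hX a ha b hb
        exact Relation.EqvGen.rel _ _ ⟨X, hX, ha, hb⟩

end Merge

section Main

lemma mem_zeroHat {n : ℕ} {D : Finset (Fin (2 * n))} :
    D ∈ zeroHat n ↔ ∃ i : Fin n, D = {oddE n i, evenE n i} := by
  simp [zeroHat, eq_comm]

lemma decomp {n : ℕ} (a : Fin (2 * n)) : ∃ i : Fin n, a = oddE n i ∨ a = evenE n i := by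
  have ha := a.2
  refine ⟨⟨a.1 / 2, by omega⟩, ?_⟩
  rcases Nat.even_or_odd a.1 with ⟨k, hk⟩ | ⟨k, hk⟩
  · exact Or.inl (Fin.ext (show a.1 = 2 * (a.1 / 2) by omega))
  · exact Or.inr (Fin.ext (show a.1 = 2 * (a.1 / 2) + 1 by omega))

lemma pair_no_middle {n : ℕ} (j : Fin n) {x y z : Fin (2 * n)}
    (hx : x ∈ ({oddE n j, evenE n j} : Finset (Fin (2 * n))))
    (hz : z ∈ ({oddE n j, evenE n j} : Finset (Fin (2 * n))))
    (h1 : x < y) (h2 : y < z) : False := by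
  simp only [Finset.mem_insert, Finset.mem_singleton] at hx hz
  have b1 : x.1 < y.1 := h1
  have b2 : y.1 < z.1 := h2
  rcases hx with rfl | rfl <;> rcases hz with rfl | rfl <;>
    simp only [oddE, evenE] at b1 b2 <;> omega

lemma oddE_lt {n : ℕ} {i j : Fin n} (h : i < j) : oddE n i < oddE n j := by
  have h' : i.1 < j.1 := h
  exact Fin.mk_lt_mk.2 (by omega)

lemma ncle_antisymm {m : ℕ} {P Q : Finset (Finset (Fin m))} (hP : P ∈ NC m) (hQ : Q ∈ NC m)
    (h1 : ncle P Q) (h2 : ncle Q P) : P = Q := by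
  have sub : ∀ {P Q : Finset (Finset (Fin m))}, P ∈ NC m → Q ∈ NC m →
      ncle P Q → ncle Q P → P ⊆ Q := by
    intro P Q hP hQ h1 h2 B hB
    obtain ⟨D, hD, hBD⟩ := h1 B hB
    obtain ⟨B', hB', hDB'⟩ := h2 D hD
    obtain ⟨a, ha⟩ := hP.1 B hB
    have hBB' : B = B' := (hP.2.1 a).unique ⟨hB, ha⟩ ⟨hB', hDB' (hBD ha)⟩
    have hBD' : B = D := Finset.Subset.antisymm hBD (by rw [hBB']; exact hDB')
    rw [hBD']; exact hD
  exact Finset.Subset.antisymm (sub hP hQ h1 h2) (sub hQ hP h2 h1)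

/-- for any same-parity `σ ∈ NC_S(2n)`, the join `σ ∨ 0̂ₙ` equals `π̂` for a
unique `π ∈ NC(n)`. -/
theorem stmt6 (n : ℕ) (σ : Finset (Finset (Fin (2 * n))))
    (hσ : σ ∈ NC (2 * n)) (hS : SameParity σ) :
    ∃! π, π ∈ NC n ∧ IsJoin (2 * n) σ (zeroHat n) (doubleP n π) := by
  classical
  obtain ⟨hσne, hσcov, hσnc⟩ := hσ
  set F : Finset (Finset (Fin (2 * n))) := σ ∪ zeroHat n with hF
  have hFne : ∀ B ∈ F, B.Nonempty := by
    intro B hB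
    rcases Finset.mem_union.1 hB with h | h
    · exact hσne B h
    · obtain ⟨i, rfl⟩ := mem_zeroHat.1 h
      exact ⟨oddE n i, by simp⟩
  have hFinv : ∀ B ∈ F, ∀ D ∈ F, Disjoint B D → ¬Crossing B D := by
    rintro B hB D hD hdisj ⟨i, hi, p, hp, k, hk, q, hq, h1, h2, h3⟩
    rcases Finset.mem_union.1 hD with hDσ | hDz
    · rcases Finset.mem_union.1 hB with hBσ | hBz
      · by_cases hBD : B = D
        · exact Finset.disjoint_left.1 hdisj hi (hBD ▸ hi)
        · exact hσnc B hBσ D hDσ hBD ⟨i, hi, p, hp, k, hk, q, hq, h1, h2, h3⟩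
      · obtain ⟨j, rfl⟩ := mem_zeroHat.1 hBz
        exact pair_no_middle j hi hp h1 h2
    · obtain ⟨j, rfl⟩ := mem_zeroHat.1 hDz
      exact pair_no_middle j hk hq h2 h3
  obtain ⟨G, Gne, Gdisj, Gnc, Gref, Gconn⟩ := merge F.card F le_rfl hFinv hFne
  have Guniq : ∀ X ∈ G, ∀ Y ∈ G, ∀ a : Fin (2 * n), a ∈ X → a ∈ Y → X = Y := by
    intro X hX Y hY a haX haY
    by_contra hne'
    exact Finset.disjoint_left.1 (Gdisj X hX Y hY hne') haX haY
  have pairmem : ∀ i : Fin n, ({oddE n i, evenE n i} : Finset (Fin (2 * n))) ∈ F :=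
    fun i => Finset.mem_union_right _ (mem_zeroHat.2 ⟨i, rfl⟩)
  have keypair : ∀ X ∈ G, ∀ i : Fin n, (oddE n i ∈ X ↔ evenE n i ∈ X) := by
    intro X hX i
    obtain ⟨Y, hY, hsub⟩ := Gref _ (pairmem i)
    have ho : oddE n i ∈ Y := hsub (by simp)
    have he : evenE n i ∈ Y := hsub (by simp)
    constructor
    · intro h; rw [Guniq X hX Y hY _ h ho]; exact he
    · intro h; rw [Guniq X hX Y hY _ h he]; exact ho
  have cover : ∀ a : Fin (2 * n), ∃ X ∈ G, a ∈ X := by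
    intro a
    obtain ⟨i, h | h⟩ := decomp a <;>
    · obtain ⟨X, hX, hsub⟩ := Gref _ (pairmem i)
      exact ⟨X, hX, hsub (by simp [h])⟩
  set S : Finset (Fin (2 * n)) → Finset (Fin n) :=
    fun X => Finset.univ.filter (fun i : Fin n => oddE n i ∈ X) with hS'
  have memS : ∀ (X : Finset (Fin (2 * n))) (i : Fin n), i ∈ S X ↔ oddE n i ∈ X := by
    intro X i; simp [hS']
  set π : Finset (Finset (Fin n)) := G.image S with hπ'
  have dblS : ∀ X ∈ G, (S X).image (oddE n) ∪ (S X).image (evenE n) = X := by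
    intro X hX
    ext a
    simp only [Finset.mem_union, Finset.mem_image]
    constructor
    · rintro (⟨j, hj, rfl⟩ | ⟨j, hj, rfl⟩)
      · exact (memS X j).1 hj
      · exact (keypair X hX j).1 ((memS X j).1 hj)
    · intro ha
      obtain ⟨i, h | h⟩ := decomp a
      · subst h; exact Or.inl ⟨i, (memS X i).2 ha, rfl⟩
      · subst h; exact Or.inr ⟨i, (memS X i).2 ((keypair X hX i).2 ha), rfl⟩
  have dbleq : doubleP n π = G := by
    have h1 : doubleP n π =
        G.image ((fun B : Finset (Fin n) => B.image (oddE n) ∪ B.image (evenE n)) ∘ S) := by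
      rw [hπ']
      exact Finset.image_image
    rw [h1]
    exact (Finset.image_congr (fun X hX => dblS X (Finset.mem_coe.1 hX))).trans Finset.image_id
  have Sne : ∀ X ∈ G, (S X).Nonempty := by
    intro X hX
    obtain ⟨a, ha⟩ := Gne X hX
    obtain ⟨i, h | h⟩ := decomp a
    · exact ⟨i, (memS X i).2 (h ▸ ha)⟩
    · exact ⟨i, (memS X i).2 ((keypair X hX i).2 (h ▸ ha))⟩
  have πNC : π ∈ NC n := by
    refine ⟨?_, ?_, ?_⟩
    · intro B hB
      obtain ⟨X, hX, rfl⟩ := Finset.mem_image.1 hB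
      exact Sne X hX
    · intro a
      obtain ⟨X, hX, haX⟩ := cover (oddE n a)
      refine ⟨S X, ⟨Finset.mem_image_of_mem S hX, (memS X a).2 haX⟩, ?_⟩
      rintro B ⟨hB, haB⟩
      obtain ⟨Y, hY, rfl⟩ := Finset.mem_image.1 hB
      rw [Guniq Y hY X hX (oddE n a) ((memS Y a).1 haB) haX]
    · rintro B hB D hD hBD ⟨i, hi, p, hp, k, hk, q, hq, h1, h2, h3⟩
      obtain ⟨X, hX, rfl⟩ := Finset.mem_image.1 hB
      obtain ⟨Y, hY, rfl⟩ := Finset.mem_image.1 hD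
      have hXY : X ≠ Y := fun h => hBD (by rw [h])
      exact Gnc X hX Y hY hXY ⟨oddE n i, (memS X i).1 hi, oddE n p, (memS X p).1 hp,
        oddE n k, (memS Y k).1 hk, oddE n q, (memS Y q).1 hq,
        oddE_lt h1, oddE_lt h2, oddE_lt h3⟩
  have GNC : G ∈ NC (2 * n) := by
    refine ⟨Gne, ?_, Gnc⟩
    intro a
    obtain ⟨X, hX, haX⟩ := cover a
    exact ⟨X, ⟨hX, haX⟩, fun Y hY => Guniq Y hY.1 X hX a hY.2 haX⟩
  have hmin : ∀ τ ∈ NC (2 * n), ncle σ τ → ncle (zeroHat n) τ → ncle G τ := by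
    intro τ hτ h1 h2
    obtain ⟨hτne, hτcov, hτnc⟩ := hτ
    have hFτ : ∀ B ∈ F, ∃ T ∈ τ, B ⊆ T := by
      intro B hB
      rcases Finset.mem_union.1 hB with h | h
      · exact h1 B h
      · exact h2 B h
    have key : ∀ a b : Fin (2 * n), Relation.EqvGen (memRel F) a b →
        ∃ T ∈ τ, a ∈ T ∧ b ∈ T := by
      intro a b h
      induction h with
      | rel x y hxy =>
        obtain ⟨B, hB, hx, hy⟩ := hxy
        obtain ⟨T, hT, hsub⟩ := hFτ B hB
        exact ⟨T, hT, hsub hx, hsub hy⟩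
      | refl x =>
        obtain ⟨T, ⟨hT, hx⟩, _⟩ := hτcov x
        exact ⟨T, hT, hx, hx⟩
      | symm x y _ ihh =>
        obtain ⟨T, hT, ha', hb'⟩ := ihh
        exact ⟨T, hT, hb', ha'⟩
      | trans x y z _ _ ih1 ih2 =>
        obtain ⟨T, hT, hx, hy⟩ := ih1
        obtain ⟨T', hT', hy', hz⟩ := ih2
        have hTT : T = T' := (hτcov y).unique ⟨hT, hy⟩ ⟨hT', hy'⟩
        exact ⟨T, hT, hx, by rw [hTT]; exact hz⟩
    intro X hX
    obtain ⟨a, ha⟩ := Gne X hX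
    obtain ⟨T, ⟨hT, haT⟩, _⟩ := hτcov a
    refine ⟨T, hT, fun b hb => ?_⟩
    obtain ⟨T', hT', haT', hbT'⟩ := key a b (Gconn X hX a ha b hb)
    have hTT : T' = T := (hτcov a).unique ⟨hT', haT'⟩ ⟨hT, haT⟩
    rw [← hTT]; exact hbT'
  have hJoin : IsJoin (2 * n) σ (zeroHat n) (doubleP n π) := by
    refine ⟨by rw [dbleq]; exact GNC, ?_, ?_, ?_⟩
    · rw [dbleq]
      intro B hB
      exact Gref B (Finset.mem_union_left _ hB)
    · rw [dbleq]
      intro B hB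
      exact Gref B (Finset.mem_union_right _ hB)
    · intro τ hτ h1 h2
      rw [dbleq]
      exact hmin τ hτ h1 h2
  have dblinj : Function.Injective
      (fun B : Finset (Fin n) => B.image (oddE n) ∪ B.image (evenE n)) := by
    have mem_dbl : ∀ (C : Finset (Fin n)) (i : Fin n),
        oddE n i ∈ C.image (oddE n) ∪ C.image (evenE n) ↔ i ∈ C := by
      intro C i
      simp only [Finset.mem_union, Finset.mem_image]
      constructor
      · rintro (⟨j, hj, he⟩ | ⟨j, hj, he⟩)
        · simp only [oddE, Fin.mk.injEq] at he
          have : j = i := Fin.ext (by omega)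
          rwa [← this]
        · exfalso
          simp only [oddE, evenE, Fin.mk.injEq] at he
          omega
      · intro h'
        exact Or.inl ⟨i, h', rfl⟩
    intro B B' h
    replace h : B.image (oddE n) ∪ B.image (evenE n) = B'.image (oddE n) ∪ B'.image (evenE n) := h
    ext i
    rw [← mem_dbl B i, ← mem_dbl B' i, h]
  refine ⟨π, ⟨πNC, hJoin⟩, ?_⟩
  rintro π' ⟨hπ'NC, hJoin'⟩
  have e1 : ncle (doubleP n π) (doubleP n π') :=
    hJoin.2.2.2 _ hJoin'.1 hJoin'.2.1 hJoin'.2.2.1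
  have e2 : ncle (doubleP n π') (doubleP n π) :=
    hJoin'.2.2.2 _ hJoin.1 hJoin.2.1 hJoin.2.2.1
  have hdd : doubleP n π' = doubleP n π := ncle_antisymm hJoin'.1 hJoin.1 e2 e1
  exact Finset.image_injective dblinj hdd

end Main
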